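/- Let n ≥ 1 and let K_n = G_{k_n} be the complete graph on {1,…,n}, where k_n(i) = n for all i. Then for every k with 0 ≤ k ≤ n, the following identity holds in ℤ[q]: Σ_{F ∈ F(K_n), ℓ(F) = k} q^{wt_{k_n}(F)} = s_q(n,k). Equivalently, Σ_{λ ⊢ n, ℓ(λ) = k} c_λ(k_n) = s_q(n,k). -/

import Mathlib

open Finset

/-- A Hessenberg function on the vertex set `Fin n` (0-indexed version of `{1,…,n}`):
a monotone function with `i ≤ m i` for all `i`.  The associated indifference graph
`G_m` has an edge `{i,j}` whenever `i < j ≤ m i`. -/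
structure Hessenberg (n : ℕ) where
  m : Fin n → Fin n
  mono : Monotone m
  le_m : ∀ i, i ≤ m i

/-- An increasing spanning forest of the indifference graph `G_m`, encoded by its
parent function `g` : `g j = some u` means `{u, j}` is an edge of the forest with
`u < j` and `j ≤ m u` (so that `{u,j}` is an edge of `G_m`); `g j = none` means `j`
is a root. -/
def ISF {n : ℕ} (h : Hessenberg n) : Type :=
  {g : Fin n → Option (Fin n) // ∀ j u, g j = some u → u < j ∧ j ≤ h.m u}

instance {n : ℕ} (h : Hessenberg n) : Fintype (ISF h) := by
  unfold ISF; infer_instance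

instance {n : ℕ} (h : Hessenberg n) : DecidableEq (ISF h) := by
  unfold ISF; infer_instance

/-- The root of the component of `j` in the forest with parent function `g`. -/
def rootOf {n : ℕ} (g : Fin n → Option (Fin n))
    (hg : ∀ j u, g j = some u → u < j) (j : Fin n) : Fin n :=
  match hj : g j with
  | none => j
  | some u => rootOf g hg u
termination_by j.val
decreasing_by exact hg j u hj

/-- The root (minimal vertex) of the component of `j` in the forest `F`. -/
def ISF.root {n : ℕ} {h : Hessenberg n} (F : ISF h) (j : Fin n) : Fin n :=
  rootOf F.1 (fun j u hj => (F.2 j u hj).1) j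

/-- The set of roots of the forest `F`. -/
def ISF.roots {n : ℕ} {h : Hessenberg n} (F : ISF h) : Finset (Fin n) :=
  univ.filter (fun j => F.1 j = none)

/-- `ℓ(F)`, the number of connected components of `F`. -/
def ISF.numComp {n : ℕ} {h : Hessenberg n} (F : ISF h) : ℕ := F.roots.card

/-- The number of vertices of the component of `F` with root `r`. -/
def ISF.compSize {n : ℕ} {h : Hessenberg n} (F : ISF h) (r : Fin n) : ℕ :=
  (univ.filter (fun w => F.root w = r)).card

/-- `λ(F)`: the multiset of component sizes of `F` (a partition of `n`). -/
def ISF.parts {n : ℕ} {h : Hessenberg n} (F : ISF h) : Multiset ℕ :=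
  F.roots.val.map F.compSize

/-- The number of `G_m`-inversions of `F`: pairs `v < w` that are edges of `G_m`
(`w ≤ m v`) such that the component of `v` comes strictly after (has larger root
than) the component of `w`. -/
def ISF.inv {n : ℕ} {h : Hessenberg n} (F : ISF h) : ℕ :=
  (univ.filter (fun p : Fin n × Fin n =>
    p.1 < p.2 ∧ p.2 ≤ h.m p.1 ∧ F.root p.2 < F.root p.1)).card

/-- The length of the edge of `F` below `j` (0 if `j` is a root): the number of
vertices of the component of `j` strictly between the two endpoints. -/
def ISF.edgeLen {n : ℕ} {h : Hessenberg n} (F : ISF h) (j : Fin n) : ℕ :=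
  (F.1 j).elim 0 (fun u =>
    (univ.filter (fun w => F.root w = F.root j ∧ u < w ∧ w < j)).card)

/-- `wt_m(F) = inv(F) + Σ_T wt(T)`, the weight of the increasing spanning forest. -/
def ISF.wt {n : ℕ} {h : Hessenberg n} (F : ISF h) : ℕ :=
  F.inv + ∑ j, F.edgeLen j

/-- `y_{λ(F)}`, the product of `y` over the component sizes of `F`. -/
def yProd {R : Type*} [CommRing R] (y : ℕ → R) {n : ℕ} {h : Hessenberg n}
    (F : ISF h) : R :=
  ∏ r ∈ F.roots, y (F.compSize r)

/-- `X(m) = Σ_{F ∈ F(G_m)} q^{wt_m(F)} y_{λ(F)}`. -/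
def Xfun {R : Type*} [CommRing R] (q : R) (y : ℕ → R) {n : ℕ} (h : Hessenberg n) : R :=
  ∑ F : ISF h, q ^ F.wt * yProd y F

/-- The `q`-integer `[j]_q = 1 + q + ⋯ + q^{j-1}`. -/
def qInt {R : Type*} [CommRing R] (q : R) (j : ℕ) : R := ∑ k ∈ range j, q ^ k

/-- The `q`-factorial `n!_q = Π_{j=1}^n [j]_q`. -/
def qFact {R : Type*} [CommRing R] (q : R) (n : ℕ) : R := ∏ j ∈ range n, qInt q (j + 1)

/-- The Hessenberg function of the complete graph `K_k`: `m(i) = k` for all `i`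
(0-indexed: the constant function with value `k - 1`). -/
def completeH (k : ℕ) : Hessenberg k where
  m := fun i => ⟨k - 1, by have := i.isLt; omega⟩
  mono := fun _ _ _ => le_refl _
  le_m := fun i => by
    have := i.isLt
    simp only [Fin.le_def]
    omega

theorem finStrongInduction {n : ℕ} {C : Fin n → Prop}
    (ih : ∀ j, (∀ u, u < j → C u) → C j) : ∀ j, C j := by
  have H : ∀ N (j : Fin n), j.val < N → C j := by
    intro N
    induction N with
    | zero => intro j hj; omega
    | succ N ihN =>
      intro j _
      refine ih j (fun u hu => ihN u ?_)
      have h1 := Fin.lt_def.1 hu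
      omega
  intro j; exact H n j j.isLt

theorem rootOf_none {n : ℕ} (g : Fin n → Option (Fin n))
    (hg : ∀ j u, g j = some u → u < j) (j : Fin n) (h : g j = none) :
    rootOf g hg j = j := by
  rw [rootOf]; split
  · rfl
  · rename_i u hu; rw [h] at hu; exact absurd hu (by simp)

theorem rootOf_some {n : ℕ} (g : Fin n → Option (Fin n))
    (hg : ∀ j u, g j = some u → u < j) (j u : Fin n) (h : g j = some u) :
    rootOf g hg j = rootOf g hg u := by
  rw [rootOf]; split
  · rename_i hu; rw [h] at hu; exact absurd hu (by simp)
  · rename_i v hv; rw [h] at hv; cases hv; rfl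

namespace ISF
variable {n : ℕ} {h : Hessenberg n}

theorem root_eq_of_none (F : ISF h) {j : Fin n} (hj : F.1 j = none) : F.root j = j :=
  rootOf_none _ _ j hj

theorem root_eq_of_some (F : ISF h) {j u : Fin n} (hj : F.1 j = some u) :
    F.root j = F.root u :=
  rootOf_some _ _ j u hj

theorem apply_root (F : ISF h) (j : Fin n) : F.1 (F.root j) = none := by
  induction j using finStrongInduction with
  | ih j ih =>
    cases hj : F.1 j with
    | none => rwa [F.root_eq_of_none hj]
    | some u =>
      rw [F.root_eq_of_some hj]
      exact ih u (F.2 j u hj).1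

theorem root_root (F : ISF h) (j : Fin n) : F.root (F.root j) = F.root j :=
  F.root_eq_of_none (F.apply_root j)

theorem root_mem_roots (F : ISF h) (j : Fin n) : F.root j ∈ F.roots := by
  simp [ISF.roots, F.apply_root j]

end ISF

theorem le_m_complete {k : ℕ} (j u : Fin k) : j ≤ (completeH k).m u := by
  have := j.isLt
  simp only [completeH, Fin.le_def]
  omega

theorem pmap_map_castSucc {n : ℕ} (x : Option (Fin n))
    (H : ∀ a ∈ x.map Fin.castSucc, a.val < n) :
    Option.pmap (fun (u : Fin (n + 1)) hu => (⟨u.val, hu⟩ : Fin n))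
      (x.map Fin.castSucc) H = x := by
  cases x <;> simp

theorem map_castSucc_pmap {n : ℕ} (y : Option (Fin (n + 1))) (H : ∀ a ∈ y, a.val < n) :
    Option.map Fin.castSucc (Option.pmap (fun u hu => (⟨u.val, hu⟩ : Fin n)) y H) = y := by
  cases y <;> simp [Fin.ext_iff]

/-- Extend a forest on `Fin n` to one on `Fin (n+1)` by attaching the new
largest vertex to parent `o` (or making it a root if `o = none`). -/
def combine {n : ℕ} (F : ISF (completeH n)) (o : Option (Fin n)) :
    ISF (completeH (n + 1)) :=
  ⟨fun j => Fin.lastCases (o.map Fin.castSucc) (fun i => (F.1 i).map Fin.castSucc) j, by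
    intro j u hj
    refine ⟨?_, le_m_complete _ _⟩
    induction j using Fin.lastCases with
    | last =>
      simp only [Fin.lastCases_last] at hj
      obtain ⟨v, _, rfl⟩ := Option.map_eq_some_iff.1 hj
      exact Fin.castSucc_lt_last v
    | cast i =>
      simp only [Fin.lastCases_castSucc] at hj
      obtain ⟨v, hv, rfl⟩ := Option.map_eq_some_iff.1 hj
      exact Fin.castSucc_lt_castSucc_iff.2 (F.2 i v hv).1⟩

@[simp] theorem combine_castSucc {n : ℕ} (F : ISF (completeH n)) (o : Option (Fin n))
    (i : Fin n) : (combine F o).1 (Fin.castSucc i) = (F.1 i).map Fin.castSucc := by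
  simp [combine]

@[simp] theorem combine_last {n : ℕ} (F : ISF (completeH n)) (o : Option (Fin n)) :
    (combine F o).1 (Fin.last n) = o.map Fin.castSucc := by
  simp [combine]

/-- The restriction of a forest on `Fin (n+1)` to `Fin n`. -/
def splitF {n : ℕ} (G : ISF (completeH (n + 1))) : ISF (completeH n) :=
  ⟨fun i => Option.pmap (fun u hu => (⟨u.val, hu⟩ : Fin n)) (G.1 i.castSucc)
      (fun u hu => by
        have := (G.2 i.castSucc u hu).1
        have h2 := i.isLt
        simp only [Fin.lt_def, Fin.coe_castSucc] at this
        omega), by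
    intro j u hj
    refine ⟨?_, le_m_complete _ _⟩
    cases hG : G.1 j.castSucc with
    | none => simp [hG] at hj
    | some v =>
      simp only [hG, Option.pmap_some] at hj
      cases hj
      have := (G.2 j.castSucc v hG).1
      simpa [Fin.lt_def] using this⟩

def combEquiv (n : ℕ) : ISF (completeH n) × Option (Fin n) ≃ ISF (completeH (n + 1)) where
  toFun p := combine p.1 p.2
  invFun G := (splitF G, (G.1 (Fin.last n)).pmap (fun u hu => (⟨u.val, hu⟩ : Fin n))
    (fun u hu => by
      have := (G.2 (Fin.last n) u hu).1
      simpa [Fin.lt_def] using this))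
  left_inv p := by
    obtain ⟨F, o⟩ := p
    refine Prod.ext (Subtype.ext (funext fun i => ?_)) ?_
    · simp only [splitF, combine_castSucc]
      exact pmap_map_castSucc _ _
    · simp only [combine_last]
      exact pmap_map_castSucc _ _
  right_inv G := by
    refine Subtype.ext (funext fun j => ?_)
    induction j using Fin.lastCases with
    | last =>
      rw [combine_last]
      exact map_castSucc_pmap _ _
    | cast i =>
      rw [combine_castSucc]
      exact map_castSucc_pmap _ _
theorem root_combine {n : ℕ} (F : ISF (completeH n)) (o : Option (Fin n)) (i : Fin n) :
    (combine F o).root (Fin.castSucc i) = Fin.castSucc (F.root i) := by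
  induction i using finStrongInduction with
  | ih i ih =>
    cases hF : F.1 i with
    | none =>
      rw [F.root_eq_of_none hF, ISF.root_eq_of_none _ (by simp [hF])]
    | some u =>
      rw [F.root_eq_of_some hF,
        ISF.root_eq_of_some _ (show (combine F o).1 i.castSucc = some u.castSucc by
          simp [hF])]
      exact ih u (F.2 i u hF).1

theorem root_combine_last_none {n : ℕ} (F : ISF (completeH n)) :
    (combine F none).root (Fin.last n) = Fin.last n :=
  ISF.root_eq_of_none _ (by simp)

theorem root_combine_last_some {n : ℕ} (F : ISF (completeH n)) (u : Fin n) :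
    (combine F (some u)).root (Fin.last n) = Fin.castSucc (F.root u) := by
  rw [ISF.root_eq_of_some _ (show (combine F (some u)).1 (Fin.last n) = some u.castSucc by simp)]
  exact root_combine F _ u

theorem numComp_combine {n : ℕ} (F : ISF (completeH n)) (o : Option (Fin n)) :
    (combine F o).numComp = F.numComp + if o = none then 1 else 0 := by
  unfold ISF.numComp ISF.roots
  rw [Finset.card_filter, Finset.card_filter, Fin.sum_univ_castSucc]
  simp only [combine_castSucc, combine_last, Option.map_eq_none_iff]

theorem edgeLen_combine_castSucc {n : ℕ} (F : ISF (completeH n)) (o : Option (Fin n))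
    (i : Fin n) : (combine F o).edgeLen i.castSucc = F.edgeLen i := by
  unfold ISF.edgeLen
  rw [combine_castSucc]
  cases hF : F.1 i with
  | none => simp
  | some u =>
    simp only [Option.map_some, Option.elim_some]
    rw [Finset.card_filter, Finset.card_filter, Fin.sum_univ_castSucc]
    have hlast : (if (combine F o).root (Fin.last n) = (combine F o).root (Fin.castSucc i) ∧
        Fin.castSucc u < Fin.last n ∧ Fin.last n < Fin.castSucc i then (1:ℕ) else 0) = 0 := by
      simp [(Fin.castSucc_lt_last i).asymm]
    rw [hlast, add_zero]
    apply Finset.sum_congr rfl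
    intro w _
    apply if_congr _ rfl rfl
    rw [root_combine, root_combine, Fin.castSucc_inj, Fin.castSucc_lt_castSucc_iff,
      Fin.castSucc_lt_castSucc_iff]

theorem edgeLen_combine_last_none {n : ℕ} (F : ISF (completeH n)) :
    (combine F none).edgeLen (Fin.last n) = 0 := by
  unfold ISF.edgeLen
  simp

theorem edgeLen_combine_last_some {n : ℕ} (F : ISF (completeH n)) (u : Fin n) :
    (combine F (some u)).edgeLen (Fin.last n)
      = (univ.filter (fun w => F.root w = F.root u ∧ u < w)).card := by
  unfold ISF.edgeLen
  rw [combine_last]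
  simp only [Option.map_some, Option.elim_some]
  rw [Finset.card_filter, Finset.card_filter, Fin.sum_univ_castSucc]
  have hlast : (if (combine F (some u)).root (Fin.last n) =
      (combine F (some u)).root (Fin.last n) ∧
      Fin.castSucc u < Fin.last n ∧ Fin.last n < Fin.last n then (1:ℕ) else 0) = 0 := by
    simp
  rw [hlast, add_zero]
  apply Finset.sum_congr rfl
  intro w _
  apply if_congr _ rfl rfl
  rw [root_combine, root_combine_last_some, Fin.castSucc_inj, Fin.castSucc_lt_castSucc_iff]
  simp [Fin.castSucc_lt_last]

theorem inv_complete {k : ℕ} (F : ISF (completeH k)) :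
    F.inv = (univ.filter (fun p : Fin k × Fin k =>
      p.1 < p.2 ∧ F.root p.2 < F.root p.1)).card := by
  unfold ISF.inv
  congr 1
  apply Finset.filter_congr
  intro p _
  simp [le_m_complete]

theorem inv_eq_sum {k : ℕ} (F : ISF (completeH k)) :
    F.inv = ∑ i : Fin k, ∑ j : Fin k, if i < j ∧ F.root j < F.root i then 1 else 0 := by
  rw [inv_complete, Finset.card_filter, Fintype.sum_prod_type]

theorem inv_combine {n : ℕ} (F : ISF (completeH n)) (o : Option (Fin n)) :
    (combine F o).inv = F.inv + (o.elim 0 (fun u =>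
      (univ.filter (fun v => F.root u < F.root v)).card)) := by
  rw [inv_eq_sum, inv_eq_sum, Fin.sum_univ_castSucc]
  have hA : ∀ p2 : Fin (n + 1), (if Fin.last n < p2 ∧
      (combine F o).root p2 < (combine F o).root (Fin.last n) then (1:ℕ) else 0) = 0 := by
    intro p2; simp [Fin.not_lt.2 (Fin.le_last p2)]
  have hB : ∀ i : Fin n, (∑ p2 : Fin (n + 1), if Fin.castSucc i < p2 ∧
      (combine F o).root p2 < (combine F o).root (Fin.castSucc i) then (1:ℕ) else 0)
      = (∑ j : Fin n, if i < j ∧ F.root j < F.root i then 1 else 0)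
        + (if (combine F o).root (Fin.last n) < Fin.castSucc (F.root i) then 1 else 0) := by
    intro i
    rw [Fin.sum_univ_castSucc]
    congr 1
    · apply Finset.sum_congr rfl; intro j _
      apply if_congr _ rfl rfl
      rw [root_combine, root_combine, Fin.castSucc_lt_castSucc_iff,
        Fin.castSucc_lt_castSucc_iff]
    · apply if_congr _ rfl rfl
      rw [root_combine]
      simp [Fin.castSucc_lt_last]
  rw [Finset.sum_congr rfl (fun p2 _ => hA p2), Finset.sum_const_zero, add_zero,
    Finset.sum_congr rfl (fun i _ => hB i), Finset.sum_add_distrib]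
  congr 1
  cases o with
  | none =>
    have h2 : ∀ i : Fin n, ¬ ((combine F none).root (Fin.last n) < Fin.castSucc (F.root i)) := by
      intro i; rw [root_combine_last_none]; exact Fin.not_lt.2 (Fin.le_last _)
    simp [h2]
  | some u =>
    simp only [Option.elim_some]
    rw [Finset.card_filter]
    apply Finset.sum_congr rfl
    intro i _
    apply if_congr _ rfl rfl
    rw [root_combine_last_some]
    exact Fin.castSucc_lt_castSucc_iff

theorem wt_combine {n : ℕ} (F : ISF (completeH n)) (o : Option (Fin n)) :
    (combine F o).wt = F.wt + (o.elim 0 (fun u =>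
      (univ.filter (fun v => F.root u < F.root v)).card
        + (univ.filter (fun w => F.root w = F.root u ∧ u < w)).card)) := by
  unfold ISF.wt
  rw [inv_combine, Fin.sum_univ_castSucc]
  have h1 : ∀ i : Fin n, (combine F o).edgeLen i.castSucc = F.edgeLen i :=
    edgeLen_combine_castSucc F o
  rw [Finset.sum_congr rfl (fun i _ => h1 i)]
  cases o with
  | none => rw [edgeLen_combine_last_none]; simp
  | some u => rw [edgeLen_combine_last_some]; simp only [Option.elim_some]; ring

section RankSum
variable {n : ℕ} (F : ISF (completeH n))

/-- The lexicographic comparison on `(root, vertex)`. -/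
def Plex (F : ISF (completeH n)) (u w : Fin n) : Prop :=
  F.root u < F.root w ∨ (F.root w = F.root u ∧ u < w)

instance (u : Fin n) : DecidablePred (Plex F u) := fun w => by
  unfold Plex; infer_instance

theorem Plex_irrefl (u : Fin n) : ¬ Plex F u u := by
  unfold Plex
  simp

theorem Plex_trans {u w v : Fin n} (h1 : Plex F u w) (h2 : Plex F w v) : Plex F u v := by
  rcases h1 with h1 | ⟨h1e, h1l⟩ <;> rcases h2 with h2 | ⟨h2e, h2l⟩
  · exact Or.inl (lt_trans h1 h2)
  · exact Or.inl (h2e ▸ h1)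
  · exact Or.inl (h1e ▸ h2)
  · exact Or.inr ⟨h2e.trans h1e, lt_trans h1l h2l⟩

theorem Plex_total {u w : Fin n} (h : u ≠ w) : Plex F u w ∨ Plex F w u := by
  rcases lt_trichotomy (F.root u) (F.root w) with h1 | h1 | h1
  · exact Or.inl (Or.inl h1)
  · rcases lt_trichotomy u w with h2 | h2 | h2
    · exact Or.inl (Or.inr ⟨h1.symm, h2⟩)
    · exact absurd h2 h
    · exact Or.inr (Or.inr ⟨h1, h2⟩)
  · exact Or.inr (Or.inl h1)

/-- The rank of a vertex: the number of vertices lex-greater than it. -/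
def rkc (F : ISF (completeH n)) (u : Fin n) : ℕ := (univ.filter (Plex F u)).card

theorem rkc_lt_of_Plex {u w : Fin n} (h : Plex F u w) : rkc F w < rkc F u := by
  apply Finset.card_lt_card
  rw [Finset.ssubset_iff_of_subset]
  · exact ⟨w, by simp [h], by simp [Plex_irrefl]⟩
  · intro v hv
    simp only [Finset.mem_filter, Finset.mem_univ, true_and] at hv ⊢
    exact Plex_trans F h hv

theorem rkc_injective : Function.Injective (rkc F) := by
  intro u w huw
  by_contra h
  rcases Plex_total F h with h1 | h1
  · exact absurd huw (Nat.ne_of_gt (rkc_lt_of_Plex F h1))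
  · exact absurd huw (Nat.ne_of_lt (rkc_lt_of_Plex F h1))

theorem rkc_lt (u : Fin n) : rkc F u < n := by
  unfold rkc
  have h1 : univ.filter (Plex F u) ⊆ univ.erase u := by
    intro v hv
    simp only [Finset.mem_filter, Finset.mem_univ, true_and] at hv
    refine Finset.mem_erase.2 ⟨?_, Finset.mem_univ v⟩
    rintro rfl
    exact Plex_irrefl F _ hv
  have h2 := Finset.card_le_card h1
  rw [Finset.card_erase_of_mem (Finset.mem_univ u), Finset.card_univ, Fintype.card_fin] at h2
  have := u.isLt
  omega

theorem image_rkc : univ.image (rkc F) = Finset.range n := by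
  apply Finset.eq_of_subset_of_card_le
  · intro x hx
    obtain ⟨u, _, rfl⟩ := Finset.mem_image.1 hx
    exact Finset.mem_range.2 (rkc_lt F u)
  · rw [Finset.card_range, Finset.card_image_of_injective _ (rkc_injective F),
      Finset.card_univ, Fintype.card_fin]

theorem sum_pow_rkc {R : Type*} [CommRing R] (q : R) :
    ∑ u : Fin n, q ^ rkc F u = qInt q n := by
  rw [qInt, ← image_rkc F, Finset.sum_image (fun x _ y _ h => rkc_injective F h)]

theorem rkc_eq (u : Fin n) :
    rkc F u = (univ.filter (fun v => F.root u < F.root v)).card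
      + (univ.filter (fun w => F.root w = F.root u ∧ u < w)).card := by
  unfold rkc Plex
  rw [Finset.filter_or, Finset.card_union_of_disjoint]
  rw [Finset.disjoint_filter]
  intro v _ h1 h2
  exact absurd h2.1 (ne_of_gt h1)

end RankSum

instance : Unique (ISF (completeH 0)) where
  default := ⟨fun i => i.elim0, fun j => j.elim0⟩
  uniq := fun _ => Subtype.ext (funext fun i => i.elim0)

theorem wt_zero' (F : ISF (completeH 0)) : F.wt = 0 := by
  unfold ISF.wt
  rw [inv_eq_sum]
  simp

theorem numComp_zero' (F : ISF (completeH 0)) : F.numComp = 0 := by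
  unfold ISF.numComp ISF.roots
  simp

open Polynomial in
theorem main_identity (n : ℕ) :
    ∑ F : ISF (completeH n), (C ((X : Polynomial ℤ) ^ F.wt)) * (X : Polynomial (Polynomial ℤ)) ^ F.numComp
    = ∏ j ∈ range n, ((X : Polynomial (Polynomial ℤ)) + C (qInt (X : Polynomial ℤ) j)) := by
  induction n with
  | zero =>
    rw [range_zero, Finset.prod_empty]
    have h1 : ∀ F : ISF (completeH 0),
        (C ((X : Polynomial ℤ) ^ F.wt)) * (X : Polynomial (Polynomial ℤ)) ^ F.numComp = 1 := by
      intro F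
      rw [wt_zero', numComp_zero']
      simp
    rw [Finset.sum_congr rfl (fun F _ => h1 F), Finset.sum_const, Finset.card_univ]
    simp
  | succ n ih =>
    rw [prod_range_succ, ← ih, ← Equiv.sum_comp (combEquiv n), Fintype.sum_prod_type]
    have inner : ∀ F : ISF (completeH n),
        (∑ o : Option (Fin n), (C ((X : Polynomial ℤ) ^ ((combEquiv n) (F, o)).wt))
          * (X : Polynomial (Polynomial ℤ)) ^ ((combEquiv n) (F, o)).numComp)
        = (C ((X : Polynomial ℤ) ^ F.wt)) * (X : Polynomial (Polynomial ℤ)) ^ F.numComp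
            * ((X : Polynomial (Polynomial ℤ)) + C (qInt (X : Polynomial ℤ) n)) := by
      intro F
      rw [Fintype.sum_option]
      have hnone : ((combEquiv n) (F, none)).wt = F.wt ∧ ((combEquiv n) (F, none)).numComp = F.numComp + 1 := by
        constructor
        · rw [show (combEquiv n) (F, none) = combine F none from rfl, wt_combine]
          simp
        · rw [show (combEquiv n) (F, none) = combine F none from rfl, numComp_combine]
          simp
      have hsome : ∀ u : Fin n, ((combEquiv n) (F, some u)).wt = F.wt + rkc F u
          ∧ ((combEquiv n) (F, some u)).numComp = F.numComp := by
        intro u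
        constructor
        · rw [show (combEquiv n) (F, some u) = combine F (some u) from rfl, wt_combine,
            rkc_eq]
          simp
        · rw [show (combEquiv n) (F, some u) = combine F (some u) from rfl, numComp_combine]
          simp
      rw [hnone.1, hnone.2]
      have h2 : ∀ u : Fin n, (C ((X : Polynomial ℤ) ^ ((combEquiv n) (F, some u)).wt))
          * (X : Polynomial (Polynomial ℤ)) ^ ((combEquiv n) (F, some u)).numComp
          = (C ((X : Polynomial ℤ) ^ F.wt)) * (X : Polynomial (Polynomial ℤ)) ^ F.numComp
            * C ((X : Polynomial ℤ) ^ rkc F u) := by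
        intro u
        rw [(hsome u).1, (hsome u).2, pow_add, map_mul]
        ring
      rw [Finset.sum_congr rfl (fun u _ => h2 u), ← Finset.mul_sum, ← map_sum,
        sum_pow_rkc F (X : Polynomial ℤ)]
      ring
    rw [Finset.sum_congr rfl (fun F _ => inner F), ← Finset.sum_mul]

open Polynomial in
theorem prod_eq_sum_s (n : ℕ) (s : ℕ → Polynomial ℤ)
    (hs : ∏ j ∈ Finset.range n,
        ((Polynomial.X : Polynomial (Polynomial ℤ)) -
          Polynomial.C (qInt (Polynomial.X : Polynomial ℤ) j))
      = ∑ l ∈ Finset.range (n + 1),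
          Polynomial.C ((-1 : Polynomial ℤ) ^ (n - l) * s l) * Polynomial.X ^ l) :
    ∏ j ∈ Finset.range n, ((X : Polynomial (Polynomial ℤ)) + C (qInt (X : Polynomial ℤ) j))
      = ∑ l ∈ Finset.range (n + 1), C (s l) * X ^ l := by
  have h1 := congrArg (eval₂RingHom (C : Polynomial ℤ →+* Polynomial (Polynomial ℤ)) (-X)) hs
  simp only [map_prod, map_sum, coe_eval₂RingHom, eval₂_sub, eval₂_X, eval₂_C, eval₂_mul,
    eval₂_pow] at h1
  have h2 : ∏ j ∈ Finset.range n, (-(X : Polynomial (Polynomial ℤ)) - C (qInt (X : Polynomial ℤ) j))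
      = (-1) ^ n * ∏ j ∈ Finset.range n, ((X : Polynomial (Polynomial ℤ)) + C (qInt (X : Polynomial ℤ) j)) := by
    rw [show ∏ j ∈ Finset.range n, (-(X : Polynomial (Polynomial ℤ)) - C (qInt (X : Polynomial ℤ) j))
      = ∏ j ∈ Finset.range n, ((-1) * ((X : Polynomial (Polynomial ℤ)) + C (qInt (X : Polynomial ℤ) j)))
      from Finset.prod_congr rfl (fun j _ => by ring), Finset.prod_mul_distrib,
      Finset.prod_const, Finset.card_range]
  have h3 : ∑ l ∈ Finset.range (n + 1),
      C ((-1 : Polynomial ℤ) ^ (n - l) * s l) * (-(X : Polynomial (Polynomial ℤ))) ^ l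
      = (-1) ^ n * ∑ l ∈ Finset.range (n + 1), C (s l) * X ^ l := by
    rw [Finset.mul_sum]
    apply Finset.sum_congr rfl
    intro l hl
    have hl' : l ≤ n := by have := Finset.mem_range.1 hl; omega
    rw [map_mul, map_pow, map_neg, map_one, neg_pow (X : Polynomial (Polynomial ℤ)) l]
    rw [show ((-1 : Polynomial (Polynomial ℤ)) ^ (n - l)) * C (s l) * ((-1) ^ l * X ^ l)
      = ((-1 : Polynomial (Polynomial ℤ)) ^ (n - l) * (-1) ^ l) * (C (s l) * X ^ l) from by ring,
      ← pow_add, Nat.sub_add_cancel hl']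
  rw [h2, h3] at h1
  exact mul_left_cancel₀ (pow_ne_zero n (neg_ne_zero.2 one_ne_zero)) h1

namespace ISF
variable {n : ℕ} {h : Hessenberg n}

theorem parts_sum_eq (F : ISF h) : F.parts.sum = n := by
  unfold ISF.parts
  have h1 : F.roots.sum F.compSize = n := by
    have h2 := Finset.card_eq_sum_card_fiberwise
      (f := F.root) (s := (univ : Finset (Fin n))) (t := F.roots)
      (fun x _ => F.root_mem_roots x)
    rw [Finset.card_univ, Fintype.card_fin] at h2
    exact h2.symm
  exact h1

theorem parts_pos' (F : ISF h) : ∀ {p : ℕ}, p ∈ F.parts → 0 < p := by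
  intro p hp
  unfold ISF.parts at hp
  obtain ⟨r, hr, rfl⟩ := Multiset.mem_map.1 hp
  have hr' : F.1 r = none := by
    have : r ∈ F.roots := hr
    simpa [ISF.roots] using this
  have : r ∈ univ.filter (fun w => F.root w = r) := by
    simp [F.root_eq_of_none hr']
  unfold ISF.compSize
  exact Finset.card_pos.2 ⟨r, this⟩

/-- The partition of `n` given by the component sizes of `F`. -/
def toPartition (F : ISF h) : Nat.Partition n :=
  ⟨F.parts, F.parts_pos', F.parts_sum_eq⟩

theorem card_parts (F : ISF h) : Multiset.card F.parts = F.numComp := by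
  unfold ISF.parts ISF.numComp
  rw [Multiset.card_map]
  rfl

end ISF


/-- Let `s k = s_q(n,k)` be Gould's `q`-Stirling numbers of the first
kind, defined by the identity `x(x-[1]_q)⋯(x-[n-1]_q) = Σ_k (-1)^{n-k} s_q(n,k) x^k` in
`(ℤ[q])[x]` (the hypothesis `hs`, where the outer `Polynomial.X` is `x` and the inner
`Polynomial.X` is `q`).  Then the sum of `q^{wt(F)}` over the increasing spanning forests
of `K_n` with exactly `k` components equals `s_q(n,k)`; equivalently,
`Σ_{λ ⊢ n, ℓ(λ) = k} c_λ(K_n) = s_q(n,k)`. -/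
theorem sum_forests_complete_eq_qStirling (n k : ℕ) (hn : 1 ≤ n) (hk : k ≤ n)
    (s : ℕ → Polynomial ℤ)
    (hs : ∏ j ∈ Finset.range n,
        ((Polynomial.X : Polynomial (Polynomial ℤ)) -
          Polynomial.C (qInt (Polynomial.X : Polynomial ℤ) j))
      = ∑ l ∈ Finset.range (n + 1),
          Polynomial.C ((-1 : Polynomial ℤ) ^ (n - l) * s l) * Polynomial.X ^ l) :
    (∑ F ∈ Finset.univ.filter (fun F : ISF (completeH n) => F.numComp = k),
        (Polynomial.X : Polynomial ℤ) ^ F.wt) = s k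
    ∧ (∑ μ ∈ Finset.univ.filter (fun μ : Nat.Partition n => Multiset.card μ.parts = k),
        ∑ F ∈ Finset.univ.filter (fun F : ISF (completeH n) => F.parts = μ.parts),
          (Polynomial.X : Polynomial ℤ) ^ F.wt) = s k := by
  have hmain := (main_identity n).trans (prod_eq_sum_s n s hs)
  have hco := congrArg (fun p => Polynomial.coeff p k) hmain
  rw [Polynomial.finset_sum_coeff, Polynomial.finset_sum_coeff] at hco
  have hL : ∀ F : ISF (completeH n),
      (Polynomial.C ((Polynomial.X : Polynomial ℤ) ^ F.wt)
        * (Polynomial.X : Polynomial (Polynomial ℤ)) ^ F.numComp).coeff k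
      = if F.numComp = k then (Polynomial.X : Polynomial ℤ) ^ F.wt else 0 := by
    intro F
    rw [Polynomial.coeff_C_mul, Polynomial.coeff_X_pow]
    by_cases hF : F.numComp = k
    · simp [hF]
    · simp [hF, Ne.symm hF]
  have hR : ∀ l ∈ Finset.range (n + 1),
      (Polynomial.C (s l) * (Polynomial.X : Polynomial (Polynomial ℤ)) ^ l).coeff k
      = if l = k then s l else 0 := by
    intro l _
    rw [Polynomial.coeff_C_mul, Polynomial.coeff_X_pow]
    by_cases hF : l = k
    · simp [hF]
    · simp [hF, Ne.symm hF]
  rw [Finset.sum_congr rfl (fun F _ => hL F), Finset.sum_congr rfl hR,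
    ← Finset.sum_filter] at hco
  have hsum : ∑ l ∈ Finset.range (n + 1), (if l = k then s l else 0) = s k := by
    rw [Finset.sum_ite_eq' (Finset.range (n + 1)) k s]
    simp [Finset.mem_range]
    omega
  rw [hsum] at hco
  refine ⟨hco, ?_⟩
  rw [← hco]
  have hmap : ∀ F ∈ Finset.univ.filter (fun F : ISF (completeH n) => F.numComp = k),
      F.toPartition ∈ Finset.univ.filter
        (fun μ : Nat.Partition n => Multiset.card μ.parts = k) := by
    intro F hF
    simp only [Finset.mem_filter, Finset.mem_univ, true_and] at hF ⊢
    rw [show F.toPartition.parts = F.parts from rfl, ISF.card_parts, hF]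
  rw [← Finset.sum_fiberwise_of_maps_to hmap
    (fun F => (Polynomial.X : Polynomial ℤ) ^ F.wt)]
  apply Finset.sum_congr rfl
  intro μ hμ
  have hμk : Multiset.card μ.parts = k := by
    simpa using hμ
  apply Finset.sum_congr _ (fun _ _ => rfl)
  ext F
  simp only [Finset.mem_filter, Finset.mem_univ, true_and]
  constructor
  · intro hF
    constructor
    · rw [← ISF.card_parts, hF, hμk]
    · exact Nat.Partition.ext hF
  · rintro ⟨_, rfl⟩
    rfl
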